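/- arXiv:2507.12560 — 5 statements merged into one kernel-verified Lean document; each statement's English description precedes it below -/
import Mathlib

section
/- For every angle ψ ∈ ℝ, the 2×2 rotation matrix U_ψ can be written as a product of five symmetric positive definite real 2×2 matrices. -/
/-! Being a product `P * Q` of two positive definite matrices is invariant under similarity, since
`S * (P * Q) * S⁻¹ = (S * P * Sᴴ) * (Sᴴ⁻¹ * Q * S⁻¹)`; so it holds for every triangular `2 × 2`
matrix with distinct positive diagonal entries, which is similar to a positive diagonal matrix.
A real `2 × 2` matrix `M` with `0 < det M` and `0 < M 1 1` is an upper times a lower triangular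
matrix of this kind, and if `M` is not diagonal a shear conjugates it to one with `M 1 1 = 1`.
Hence every non-diagonal `M` with `0 < det M` is a product of four positive definite matrices.
Finally `U_ψ = (U_ψ * A⁻¹) * A` with `A = !![1, -1; -1, 2]` positive definite, and
`U_ψ * A⁻¹ = U_ψ * !![2, 1; 1, 1]` is never diagonal. Some such fifth factor is unavoidable:
`U_π = -1` is not a product of four positive definite matrices. -/

open Matrix Real

/-- The 2×2 rotation matrix by angle `ψ`. -/
noncomputable def rotMat (ψ : ℝ) : Matrix (Fin 2) (Fin 2) ℝ :=
  !![Real.cos ψ, Real.sin ψ; -Real.sin ψ, Real.cos ψ]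

namespace Matrix

variable {n R : Type*} [Fintype n] [CommRing R] [PartialOrder R] [StarRing R]

def IsProdOfTwoPosDef (M : Matrix n n R) : Prop :=
  ∃ P Q : Matrix n n R, P.PosDef ∧ Q.PosDef ∧ M = P * Q

namespace IsProdOfTwoPosDef

variable {A B S : Matrix n n R}

theorem of_posDef [DecidableEq n] [NoZeroDivisors R] [StarOrderedRing R] (hA : A.PosDef) :
    A.IsProdOfTwoPosDef :=
  ⟨A, 1, hA, .one, (mul_one A).symm⟩

theorem transpose (hA : A.IsProdOfTwoPosDef) : Aᵀ.IsProdOfTwoPosDef := by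
  obtain ⟨P, Q, hP, hQ, rfl⟩ := hA
  exact ⟨Qᵀ, Pᵀ, hQ.transpose, hP.transpose, transpose_mul P Q⟩

theorem of_semiconjBy [DecidableEq n] (hA : A.IsProdOfTwoPosDef) (hS : IsUnit S)
    (hSAB : SemiconjBy S A B) : B.IsProdOfTwoPosDef := by
  obtain ⟨P, Q, hP, hQ, rfl⟩ := hA
  have hS_det : IsUnit S.det := (isUnit_iff_isUnit_det S).mp hS
  refine ⟨S * P * star S, star S⁻¹ * Q * S⁻¹,
    (IsUnit.posDef_star_right_conjugate_iff hS).mpr hP,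
    (IsUnit.posDef_star_left_conjugate_iff (isUnit_nonsing_inv_iff.mpr hS)).mpr hQ, ?_⟩
  calc B = S * (P * Q) * S⁻¹ := by rw [hSAB.eq, mul_assoc, mul_nonsing_inv S hS_det, mul_one]
    _ = S * P * star (S⁻¹ * S) * Q * S⁻¹ := by
        rw [nonsing_inv_mul S hS_det, star_one, mul_one, mul_assoc S P]
    _ = _ := by simp only [star_mul, mul_assoc]

end IsProdOfTwoPosDef

theorem isProdOfTwoPosDef_upperTriangular {a b d : ℝ} (ha : 0 < a) (hd : 0 < d) (had : a ≠ d) :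
    !![a, b; 0, d].IsProdOfTwoPosDef := by
  refine (IsProdOfTwoPosDef.of_posDef (PosDef.diagonal (d := ![a, d]) ?_)).of_semiconjBy
    (S := !![1, b; 0, d - a]) ?_ ?_
  · intro i; fin_cases i <;> simpa
  · simpa [isUnit_iff_isUnit_det, det_fin_two_of, sub_eq_zero] using had.symm
  · rw [SemiconjBy, diagonal_fin_two, mul_fin_two, mul_fin_two]
    simp only [cons_val_zero, cons_val_one]
    ring_nf

theorem isProdOfTwoPosDef_lowerTriangular {a c d : ℝ} (ha : 0 < a) (hd : 0 < d) (had : a ≠ d) :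
    !![a, 0; c, d].IsProdOfTwoPosDef := by
  have hT : !![a, c; 0, d]ᵀ = !![a, 0; c, d] := by
    ext i j; fin_cases i <;> fin_cases j <;> rfl
  simpa [hT] using (isProdOfTwoPosDef_upperTriangular (b := c) ha hd had).transpose

theorem exists_isProdOfTwoPosDef_mul_of_apply_one_one_pos {M : Matrix (Fin 2) (Fin 2) ℝ}
    (hdet : 0 < M.det) (hM : 0 < M 1 1) :
    ∃ X Y, X.IsProdOfTwoPosDef ∧ Y.IsProdOfTwoPosDef ∧ M = X * Y := by
  -- a UL factorization, with the free scaling chosen so that neither diagonal is constant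
  refine ⟨!![M 1 1 + M.det / M 1 1, M 0 1; 0, M 1 1],
    !![M.det / (M 1 1 ^ 2 + M.det), 0; M 1 0 / M 1 1, 1],
    isProdOfTwoPosDef_upperTriangular (by positivity) hM (by simp [hdet.ne', hM.ne']),
    isProdOfTwoPosDef_lowerTriangular (by positivity) one_pos ?_, ?_⟩
  · rw [Ne, div_eq_one_iff_eq (by positivity)]
    nlinarith
  · ext i j
    fin_cases i <;> fin_cases j <;> simp
    · rw [det_fin_two] at hdet ⊢
      field_simp
      ring
    · field_simp

theorem exists_isProdOfTwoPosDef_mul_of_apply_zero_one_ne_zero {M : Matrix (Fin 2) (Fin 2) ℝ}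
    (hdet : 0 < M.det) (hM : M 0 1 ≠ 0) :
    ∃ X Y, X.IsProdOfTwoPosDef ∧ Y.IsProdOfTwoPosDef ∧ M = X * Y := by
  set y := (M 1 1 - 1) / M 0 1
  set S : Matrix (Fin 2) (Fin 2) ℝ := !![1, 0; y, 1]
  set S' : Matrix (Fin 2) (Fin 2) ℝ := !![1, 0; -y, 1]
  have hSS' : S * S' = 1 := by simp [S, S', one_fin_two]
  have hS'S : S' * S = 1 := by simp [S, S', one_fin_two]
  have hS : IsUnit S := by simp [isUnit_iff_isUnit_det, S, det_fin_two_of]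
  have hdet' : 0 < (S' * M * S).det := by
    rw [det_mul, det_mul]
    simpa [S, S', det_fin_two_of] using hdet
  have h11 : (S' * M * S) 1 1 = 1 := by
    simp [S, S', y, mul_apply, vecMul, dotProduct, Fin.sum_univ_two]
    field_simp
    ring
  obtain ⟨X, Y, hX, hY, hXY⟩ :=
    exists_isProdOfTwoPosDef_mul_of_apply_one_one_pos hdet' (h11 ▸ one_pos)
  refine ⟨S * X * S', S * Y * S', hX.of_semiconjBy hS ?_, hY.of_semiconjBy hS ?_, ?_⟩
  · rw [SemiconjBy, mul_assoc, hS'S, mul_one]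
  · rw [SemiconjBy, mul_assoc, hS'S, mul_one]
  · calc M = S * (S' * M * S) * S' := by
          rw [← mul_assoc, ← mul_assoc, hSS', one_mul, mul_assoc, hSS', mul_one]
      _ = S * X * S' * (S * Y * S') := by
          rw [hXY]; simp only [mul_assoc]; rw [← mul_assoc S' S, hS'S, one_mul]

theorem exists_isProdOfTwoPosDef_mul_of_not_isDiag {M : Matrix (Fin 2) (Fin 2) ℝ}
    (hdet : 0 < M.det) (hM : ¬ M.IsDiag) :
    ∃ X Y, X.IsProdOfTwoPosDef ∧ Y.IsProdOfTwoPosDef ∧ M = X * Y := by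
  have h : M 0 1 ≠ 0 ∨ M 1 0 ≠ 0 := by
    by_contra! h
    exact hM fun i j hij => by fin_cases i <;> fin_cases j <;> simp_all
  rcases h with h01 | h10
  · exact exists_isProdOfTwoPosDef_mul_of_apply_zero_one_ne_zero hdet h01
  · obtain ⟨X, Y, hX, hY, hXY⟩ := exists_isProdOfTwoPosDef_mul_of_apply_zero_one_ne_zero
      (M := Mᵀ) (by rwa [det_transpose]) h10
    exact ⟨Yᵀ, Xᵀ, hY.transpose, hX.transpose, by rw [← transpose_mul, ← hXY, transpose_transpose]⟩

end Matrix

/-- For every angle `ψ ∈ ℝ`, the 2×2 rotation matrix `U_ψ` can be written as a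
product of five symmetric positive definite real 2×2 matrices. -/
theorem rotation_eq_product_of_five_posDef (ψ : ℝ) :
    ∃ M₁ M₂ M₃ M₄ M₅ : Matrix (Fin 2) (Fin 2) ℝ,
      M₁.PosDef ∧ M₂.PosDef ∧ M₃.PosDef ∧ M₄.PosDef ∧ M₅.PosDef ∧
      rotMat ψ = M₅ * M₄ * M₃ * M₂ * M₁ := by
  have hA : (!![1, -1; -1, 2] : Matrix (Fin 2) (Fin 2) ℝ).PosDef := by
    have hS : IsUnit (!![1, 0; -1, 1] : Matrix (Fin 2) (Fin 2) ℝ) := by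
      simp [isUnit_iff_isUnit_det, det_fin_two_of]
    convert (IsUnit.posDef_star_right_conjugate_iff hS).mpr (PosDef.one (n := Fin 2) (R := ℝ))
      using 1
    ext i j; fin_cases i <;> fin_cases j <;> norm_num [mul_apply, Fin.sum_univ_two]
  have hdet : 0 < (rotMat ψ * !![2, 1; 1, 1]).det := by
    rw [det_mul, rotMat, det_fin_two_of, det_fin_two_of]
    nlinarith [sin_sq_add_cos_sq ψ]
  have hdiag : ¬ (rotMat ψ * !![2, 1; 1, 1]).IsDiag := fun h => by
    have h01 : cos ψ + sin ψ = 0 := by simpa [rotMat, mul_fin_two] using h (i := 0) (j := 1)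
    have h10 : -(sin ψ * 2) + cos ψ = 0 := by
      simpa [rotMat, mul_fin_two] using h (i := 1) (j := 0)
    nlinarith [sin_sq_add_cos_sq ψ]
  obtain ⟨_, _, ⟨M₅, M₄, h₅, h₄, rfl⟩, ⟨M₃, M₂, h₃, h₂, rfl⟩, hXY⟩ :=
    exists_isProdOfTwoPosDef_mul_of_not_isDiag hdet hdiag
  refine ⟨_, M₂, M₃, M₄, M₅, hA, h₂, h₃, h₄, h₅, ?_⟩
  calc rotMat ψ = rotMat ψ * !![2, 1; 1, 1] * !![1, -1; -1, 2] := by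
        rw [mul_assoc, mul_fin_two]; norm_num [← one_fin_two]
    _ = _ := by rw [hXY]; simp only [mul_assoc]
end

section
/- For every angle ψ with |ψ| < π, the 2×2 rotation matrix U_ψ can be written as a product of four symmetric positive definite real 2×2 matrices. -/
/-!
Write `ψ = 2φ`, so that `cos φ > 0`, and let `E = diag(m, m⁻¹)`. Then
`U_ψ = (U_φ E) (E⁻¹ U_φ)`, and for `m` large both factors have determinant `1` and trace
`cos φ (m + m⁻¹) > 2`, hence distinct positive eigenvalues. If a real `2 × 2` matrix with positive
determinant, trace and discriminant has a nonzero off-diagonal entry, a shear conjugates it (or its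
transpose) to a positive diagonal matrix times a positive definite one; otherwise it is itself
positive definite. Conjugation preserves products of two positive definite matrices:
`W A B W⁻¹ = (W A Wᵀ) (W⁻ᵀ B W⁻¹)`.
-/

open Matrix Real

namespace Matrix

def IsProdTwoPosDef {n : Type*} [Fintype n] (M : Matrix n n ℝ) : Prop :=
  ∃ A B : Matrix n n ℝ, A.PosDef ∧ B.PosDef ∧ M = A * B

section

variable {n : Type*} [Fintype n] {M N W : Matrix n n ℝ}

theorem IsProdTwoPosDef.transpose (hM : M.IsProdTwoPosDef) : Mᵀ.IsProdTwoPosDef := by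
  obtain ⟨A, B, hA, hB, rfl⟩ := hM
  refine ⟨B, A, hB, hA, ?_⟩
  rw [transpose_mul, ← conjTranspose_eq_transpose_of_trivial,
    ← conjTranspose_eq_transpose_of_trivial, hA.isHermitian.eq, hB.isHermitian.eq]

variable [DecidableEq n]

theorem PosDef.isProdTwoPosDef (hM : M.PosDef) : M.IsProdTwoPosDef :=
  ⟨M, 1, hM, .one, (mul_one M).symm⟩

theorem IsProdTwoPosDef.of_mul_eq_mul (hN : N.IsProdTwoPosDef) (hW : IsUnit W)
    (h : M * W = W * N) : M.IsProdTwoPosDef := by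
  obtain ⟨A, B, hA, hB, rfl⟩ := hN
  have hdet : IsUnit W.det := (isUnit_iff_isUnit_det W).1 hW
  refine ⟨W * A * star W, star W⁻¹ * B * W⁻¹,
    (IsUnit.posDef_star_right_conjugate_iff hW).2 hA,
    (IsUnit.posDef_star_left_conjugate_iff (isUnit_nonsing_inv_iff.2 hW)).2 hB, ?_⟩
  have hstar : star W * star W⁻¹ = 1 := by rw [← star_mul, nonsing_inv_mul W hdet, star_one]
  calc M = M * W * W⁻¹ := by rw [mul_assoc, mul_nonsing_inv W hdet, mul_one]
    _ = W * A * (star W * star W⁻¹) * B * W⁻¹ := by rw [h, hstar]; noncomm_ring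
    _ = _ := by noncomm_ring

end

theorem posDef_fin_two_of {a b d : ℝ} (ha : 0 < a) (hdet : 0 < a * d - b ^ 2) :
    (!![a, b; b, d]).PosDef := by
  refine PosDef.of_dotProduct_mulVec_pos ?_ fun x hx => ?_
  · ext i j; fin_cases i <;> fin_cases j <;> rfl
  · simp only [star_trivial, dotProduct, mulVec, Fin.sum_univ_two, of_apply, cons_val',
      cons_val_zero, cons_val_one, empty_val', cons_val_fin_one]
    by_cases h1 : x 1 = 0
    · have h0 : x 0 ≠ 0 := fun h0 => hx (funext fun i => by fin_cases i <;> simp [h0, h1])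
      simp only [h1]
      nlinarith [sq_pos_of_ne_zero h0]
    · nlinarith [sq_nonneg (a * x 0 + b * x 1), sq_pos_of_ne_zero h1]

theorem isProdTwoPosDef_fin_two_of_ne_zero {a b c d : ℝ} (hc : c ≠ 0)
    (hdet : 0 < a * d - b * c) (htr : 0 < a + d)
    (hdisc : 0 < (a + d) ^ 2 - 4 * (a * d - b * c)) :
    (!![a, b; c, d]).IsProdTwoPosDef := by
  set Δ := (a + d) ^ 2 - 4 * (a * d - b * c)
  have hD : (diagonal ![Δ / 4, 1]).PosDef :=
    PosDef.diagonal fun i => by fin_cases i <;> simp [hdisc]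
  have hP : (!![2 * (a + d) / Δ, 1; 1, (a + d) / 2]).PosDef := by
    refine posDef_fin_two_of (by positivity) ?_
    rw [div_mul_div_comm, one_pow, lt_sub_iff_add_lt, zero_add, one_lt_div (by positivity)]
    nlinarith
  -- The shear conjugates the matrix to `!![(a + d) / 2, Δ / 4; 1, (a + d) / 2]`.
  refine IsProdTwoPosDef.of_mul_eq_mul ⟨_, _, hD, hP, rfl⟩ (W := !![1, (a - d) / 2; 0, c]) ?_ ?_
  · simpa [isUnit_iff_isUnit_det] using hc
  · rw [diagonal_fin_two]
    simp only [mul_fin_two, cons_val_zero, cons_val_one, EmbeddingLike.apply_eq_iff_eq,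
      vecCons_inj, and_true]
    refine ⟨⟨?_, ?_⟩, ?_, ?_⟩ <;> field_simp <;> ring

theorem isProdTwoPosDef_of_fin_two {M : Matrix (Fin 2) (Fin 2) ℝ} (hdet : 0 < M.det)
    (htr : 0 < M.trace) (hdisc : 0 < M.discr) : M.IsProdTwoPosDef := by
  rw [discr_fin_two] at hdisc
  rw [eta_fin_two M] at hdet htr hdisc ⊢
  rw [det_fin_two_of] at hdet hdisc
  rw [trace_fin_two_of] at htr hdisc
  by_cases hc : M 1 0 = 0
  · by_cases hb : M 0 1 = 0
    · rw [hb, hc] at hdet ⊢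
      exact PosDef.isProdTwoPosDef (posDef_fin_two_of (by nlinarith) (by simpa using hdet))
    · convert (isProdTwoPosDef_fin_two_of_ne_zero hb (by linarith) htr (by linarith)).transpose
        using 1
      ext i j; fin_cases i <;> fin_cases j <;> rfl
  · exact isProdTwoPosDef_fin_two_of_ne_zero hc hdet htr hdisc

end Matrix

theorem rotMat_add (a b : ℝ) : rotMat (a + b) = rotMat a * rotMat b := by
  ext i j
  fin_cases i <;> fin_cases j <;> simp [rotMat, cos_add, sin_add] <;> ring

theorem isProdTwoPosDef_rotMat_mul_diagonal {φ m : ℝ} (hm : 0 < m)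
    (h : 2 < cos φ * (m + m⁻¹)) : (rotMat φ * diagonal ![m, m⁻¹]).IsProdTwoPosDef := by
  have hdet : (rotMat φ * diagonal ![m, m⁻¹]).det = 1 := by
    rw [det_mul, rotMat, det_fin_two_of, det_diagonal, Fin.prod_univ_two]
    simp [hm.ne', ← sq]
  have htr : (rotMat φ * diagonal ![m, m⁻¹]).trace = cos φ * (m + m⁻¹) := by
    simp [rotMat, diagonal_fin_two, trace_fin_two_of]
    ring
  refine isProdTwoPosDef_of_fin_two ?_ ?_ ?_
  · rw [hdet]; exact one_pos
  · rw [htr]; linarith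
  · rw [discr_fin_two, hdet, htr]; nlinarith

theorem isProdTwoPosDef_diagonal_mul_rotMat {φ m : ℝ} (hm : 0 < m)
    (h : 2 < cos φ * (m + m⁻¹)) : (diagonal ![m⁻¹, m] * rotMat φ).IsProdTwoPosDef := by
  have hRD := isProdTwoPosDef_rotMat_mul_diagonal (φ := φ) (inv_pos.2 hm)
    (by rwa [inv_inv, add_comm])
  rw [inv_inv] at hRD
  exact hRD.of_mul_eq_mul (W := diagonal ![m⁻¹, m])
    (isUnit_diagonal.2 (Pi.isUnit_iff.2 fun i => by fin_cases i <;> simp [hm.ne']))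
    (mul_assoc _ _ _)

/-- For every angle `ψ` with `|ψ| < π`, the 2×2 rotation matrix `U_ψ` can be
written as a product of four symmetric positive definite real 2×2 matrices. -/
theorem rotation_eq_product_of_four_posDef (ψ : ℝ) (hψ : |ψ| < Real.pi) :
    ∃ M₁ M₂ M₃ M₄ : Matrix (Fin 2) (Fin 2) ℝ,
      M₁.PosDef ∧ M₂.PosDef ∧ M₃.PosDef ∧ M₄.PosDef ∧
      rotMat ψ = M₄ * M₃ * M₂ * M₁ := by
  have hcos : 0 < cos (ψ / 2) := by
    obtain ⟨h₁, h₂⟩ := abs_lt.1 hψ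
    exact cos_pos_of_mem_Ioo ⟨by linarith, by linarith⟩
  set m := 2 / cos (ψ / 2)
  have hm : 0 < m := by positivity
  have htr : 2 < cos (ψ / 2) * (m + m⁻¹) := by
    have : cos (ψ / 2) * m = 2 := by simp only [m]; field_simp
    nlinarith [mul_pos hcos (inv_pos.2 hm)]
  obtain ⟨A, B, hA, hB, hAB⟩ := isProdTwoPosDef_rotMat_mul_diagonal hm htr
  obtain ⟨C, D, hC, hD, hCD⟩ := isProdTwoPosDef_diagonal_mul_rotMat hm htr
  refine ⟨D, C, B, A, hD, hC, hB, hA, ?_⟩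
  have hdiag : diagonal ![m, m⁻¹] * diagonal ![m⁻¹, m] = 1 := by
    rw [diagonal_mul_diagonal, ← diagonal_one]
    congr 1; ext i; fin_cases i <;> simp [hm.ne']
  calc rotMat ψ = rotMat (ψ / 2) * rotMat (ψ / 2) := by rw [← rotMat_add, add_halves]
    _ = rotMat (ψ / 2) * diagonal ![m, m⁻¹] * (diagonal ![m⁻¹, m] * rotMat (ψ / 2)) := by
      rw [mul_assoc, ← mul_assoc (diagonal _), hdiag, one_mul]
    _ = A * B * C * D := by rw [hAB, hCD, ← mul_assoc]
end

section
/- Every real 2×2 matrix Φ with det Φ > 0 can be written as a product of at most five symmetric positive definite real 2×2 matrices. -/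
/-!
A real 2 × 2 matrix `A` with positive trace and determinant and `4 det A < (tr A)²` (distinct
positive eigenvalues) is a product `(A P) P⁻¹` of two positive definite matrices, for a positive
definite `P` that makes `A P` symmetric. If `Φ` is not scalar, `G ↦ tr (Φ G⁻¹)` takes every value
on the matrices `G` with eigenvalues `2` and `1 / 2`, so `Φ = (Φ G⁻¹) G` with both factors of
this kind. A negative scalar matrix is a positive definite diagonal matrix times the non-scalar
`diag (-1, -2)`.
-/

open Matrix

namespace Matrix

section

variable {n R : Type*} [Fintype n] [DecidableEq n] [Ring R] [PartialOrder R] [StarRing R]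

def IsProdPosDef (k : ℕ) (A : Matrix n n R) : Prop :=
  ∃ l : List (Matrix n n R), l.length ≤ k ∧ (∀ M ∈ l, M.PosDef) ∧ A = l.prod

lemma PosDef.isProdPosDef_one {A : Matrix n n R} (hA : A.PosDef) : IsProdPosDef 1 A :=
  ⟨[A], by simp, by simpa using hA, by simp⟩

lemma IsProdPosDef.mul {k m : ℕ} {A B : Matrix n n R} (hA : IsProdPosDef k A)
    (hB : IsProdPosDef m B) : IsProdPosDef (k + m) (A * B) := by
  obtain ⟨l₁, hl₁, hpos₁, rfl⟩ := hA
  obtain ⟨l₂, hl₂, hpos₂, rfl⟩ := hB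
  refine ⟨l₁ ++ l₂, by simp; omega, ?_, by simp⟩
  simp only [List.mem_append]
  rintro M (hM | hM)
  exacts [hpos₁ M hM, hpos₂ M hM]

lemma IsProdPosDef.mono {k m : ℕ} {A : Matrix n n R} (hkm : k ≤ m) (hA : IsProdPosDef k A) :
    IsProdPosDef m A :=
  let ⟨l, hl, hpos, hprod⟩ := hA
  ⟨l, hl.trans hkm, hpos, hprod⟩

end

open scoped ComplexOrder in
lemma IsHermitian.posDef_of_trace_pos_of_det_pos {𝕜 : Type*} [RCLike 𝕜]
    {A : Matrix (Fin 2) (Fin 2) 𝕜} (hA : A.IsHermitian) (htr : 0 < A.trace) (hdet : 0 < A.det) :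
    A.PosDef := by
  rw [hA.trace_eq_sum_eigenvalues, Fin.sum_univ_two, ← RCLike.ofReal_add,
    RCLike.ofReal_pos] at htr
  rw [hA.det_eq_prod_eigenvalues, Fin.prod_univ_two, ← RCLike.ofReal_mul,
    RCLike.ofReal_pos] at hdet
  rw [hA.posDef_iff_eigenvalues_pos, Fin.forall_fin_two]
  constructor <;> nlinarith [pos_and_pos_or_neg_and_neg_of_mul_pos hdet]

lemma isProdPosDef_two_of_four_mul_det_lt_sq_trace {A : Matrix (Fin 2) (Fin 2) ℝ}
    (htr : 0 < A.trace) (hdet : 0 < A.det) (hdisc : 4 * A.det < A.trace ^ 2) :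
    IsProdPosDef 2 A := by
  obtain ⟨a, b, c, d, rfl⟩ : ∃ a b c d, A = !![a, b; c, d] := ⟨_, _, _, _, A.eta_fin_two⟩
  rw [trace_fin_two_of] at htr hdisc
  rw [det_fin_two_of] at hdet hdisc
  have hdisc' : 0 < (a - d) ^ 2 + 4 * (b * c) := by linarith
  have hnorm : 0 < (b + c) ^ 2 + (a - d) ^ 2 := by nlinarith [sq_nonneg (b - c)]
  -- `P = N Nᵀ + N²` for the traceless part `N = A - (tr A / 2) • 1`; `N²` is scalar, so `A P`
  -- is symmetric.
  set P : Matrix (Fin 2) (Fin 2) ℝ :=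
    !![b * b + b * c + (a - d) ^ 2 / 2, (a - d) * (c - b) / 2;
      (a - d) * (c - b) / 2, c * c + b * c + (a - d) ^ 2 / 2] with hP_def
  have hPdet : P.det = ((a - d) ^ 2 + 4 * (b * c)) * ((b + c) ^ 2 + (a - d) ^ 2) / 4 := by
    rw [det_fin_two_of]; ring
  have hP : P.PosDef := by
    refine IsHermitian.posDef_of_trace_pos_of_det_pos ?_ ?_ ?_
    · ext i j; fin_cases i <;> fin_cases j <;> rfl
    · rw [trace_fin_two_of]; linarith
    · rw [hPdet]; positivity
  have hAP : (!![a, b; c, d] * P).PosDef := by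
    refine IsHermitian.posDef_of_trace_pos_of_det_pos ?_ ?_ ?_
    · ext i j; fin_cases i <;> fin_cases j <;> simp [P] <;> ring
    · rw [hP_def, mul_fin_two, trace_fin_two_of]
      have : 0 < (a + d) / 2 * ((b + c) ^ 2 + (a - d) ^ 2) := by positivity
      linarith
    · rw [det_mul, det_fin_two_of]; exact mul_pos hdet hP.det_pos
  rw [← Matrix.mul_nonsing_inv_cancel_right (A := P) !![a, b; c, d]
    (isUnit_iff_ne_zero.mpr hP.det_pos.ne')]
  exact hAP.isProdPosDef_one.mul hP.inv.isProdPosDef_one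

lemma exists_trace_mul_adjugate_eq {Φ : Matrix (Fin 2) (Fin 2) ℝ} (hΦ : ∀ r : ℝ, Φ ≠ r • 1)
    (K : ℝ) :
    ∃ G : Matrix (Fin 2) (Fin 2) ℝ, G.trace = 5 / 2 ∧ G.det = 1 ∧ (Φ * G.adjugate).trace = K := by
  obtain ⟨a, b, c, d, rfl⟩ : ∃ a b c d, Φ = !![a, b; c, d] := ⟨_, _, _, _, Φ.eta_fin_two⟩
  have htr_adj (p q r s : ℝ) :
      (!![a, b; c, d] * adjugate !![p, q; r, s]).trace = a * s - b * r - c * q + d * p := by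
    rw [adjugate_fin_two_of, mul_fin_two, trace_fin_two_of]; ring
  -- Each witness runs along a line of matrices with eigenvalues `2, 1 / 2` on which
  -- `tr (Φ adj G)` is affine with slope `-b`, `-c`, resp. `d - a`.
  by_cases hb : b = 0
  swap
  · obtain ⟨t, ht⟩ : ∃ t, b * t = a / 2 + 2 * d - K := ⟨_, mul_div_cancel₀ _ hb⟩
    refine ⟨!![2, 0; t, 1 / 2], ?_, ?_, ?_⟩
    · rw [trace_fin_two_of]; norm_num
    · rw [det_fin_two_of]; norm_num
    · rw [htr_adj]; linear_combination -ht
  by_cases hc : c = 0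
  swap
  · obtain ⟨t, ht⟩ : ∃ t, c * t = a / 2 + 2 * d - K := ⟨_, mul_div_cancel₀ _ hc⟩
    refine ⟨!![2, t; 0, 1 / 2], ?_, ?_, ?_⟩
    · rw [trace_fin_two_of]; norm_num
    · rw [det_fin_two_of]; norm_num
    · rw [htr_adj]; linear_combination -ht
  have had : d - a ≠ 0 := by
    rintro had
    refine hΦ a ?_
    rw [sub_eq_zero.mp had, hb, hc]
    ext i j; fin_cases i <;> fin_cases j <;> norm_num
  obtain ⟨x, hx⟩ : ∃ x, (d - a) * x = K - 5 / 2 * a := ⟨_, mul_div_cancel₀ _ had⟩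
  refine ⟨!![x, 1; x * (5 / 2 - x) - 1, 5 / 2 - x], ?_, ?_, ?_⟩
  · rw [trace_fin_two_of]; ring
  · rw [det_fin_two_of]; ring
  · rw [htr_adj, hb, hc]; linear_combination hx

lemma isProdPosDef_four_of_forall_ne_smul_one {Φ : Matrix (Fin 2) (Fin 2) ℝ} (hdet : 0 < Φ.det)
    (hΦ : ∀ r : ℝ, Φ ≠ r • 1) : IsProdPosDef 4 Φ := by
  obtain ⟨G, hGtr, hGdet, hHtr⟩ := exists_trace_mul_adjugate_eq hΦ (Φ.det + 2)
  have hHdet : (Φ * G.adjugate).det = Φ.det := by simp [det_adjugate, hGdet]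
  have hΦ_eq : Φ = Φ * G.adjugate * G := by
    rw [Matrix.mul_assoc, adjugate_mul, hGdet, one_smul, Matrix.mul_one]
  rw [hΦ_eq]
  refine (isProdPosDef_two_of_four_mul_det_lt_sq_trace ?_ ?_ ?_).mul
    (isProdPosDef_two_of_four_mul_det_lt_sq_trace ?_ ?_ ?_)
  · linarith
  · rwa [hHdet]
  · rw [hHdet, hHtr]; nlinarith
  · rw [hGtr]; norm_num
  · rw [hGdet]; norm_num
  · rw [hGtr, hGdet]; norm_num

lemma isProdPosDef_five_smul_one {r : ℝ} (hr : r ≠ 0) :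
    IsProdPosDef 5 (r • 1 : Matrix (Fin 2) (Fin 2) ℝ) := by
  rcases hr.lt_or_gt with hr | hr
  · have hD : (diagonal ![-r, -r / 2]).PosDef := by
      rw [posDef_diagonal_iff, Fin.forall_fin_two]; simpa using hr
    have hE : IsProdPosDef 4 (diagonal ![-1, -2] : Matrix (Fin 2) (Fin 2) ℝ) := by
      refine isProdPosDef_four_of_forall_ne_smul_one (by norm_num) fun s hs => ?_
      have h0 : -1 = s := by simpa using congr_fun₂ hs 0 0
      have h1 : -2 = s := by simpa using congr_fun₂ hs 1 1
      linarith
    have : r • 1 = diagonal ![-r, -r / 2] * diagonal ![-1, -2] := by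
      rw [diagonal_mul_diagonal]
      ext i j; fin_cases i <;> fin_cases j <;> norm_num
    rw [this]
    exact hD.isProdPosDef_one.mul hE
  · exact ((PosDef.one.smul hr).isProdPosDef_one).mono (by norm_num)

end Matrix

/-- Every real 2×2 matrix `Φ` with `det Φ > 0` can be written as a product of
at most five symmetric positive definite real 2×2 matrices. -/
theorem two_by_two_eq_product_of_at_most_five_posDef (Φ : Matrix (Fin 2) (Fin 2) ℝ)
    (hΦ : 0 < Φ.det) :
    ∃ l : List (Matrix (Fin 2) (Fin 2) ℝ),
      l.length ≤ 5 ∧ (∀ M ∈ l, M.PosDef) ∧ Φ = l.prod := by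
  by_cases hscalar : ∀ r : ℝ, Φ ≠ r • 1
  · exact (isProdPosDef_four_of_forall_ne_smul_one hΦ hscalar).mono (by norm_num)
  · obtain ⟨r, rfl⟩ := not_forall_not.mp hscalar
    refine isProdPosDef_five_smul_one ?_
    rintro rfl
    simp at hΦ
end

section
/- Let Σ₀ and Σ₁ be symmetric positive definite real n×n matrices. Then M = Σ₀^{-1/2} (Σ₀^{1/2} Σ₁ Σ₀^{1/2})^{1/2} Σ₀^{-1/2} is the unique symmetric positive definite real n×n matrix satisfying M Σ₀ M = Σ₁; that is, M is positive definite, M Σ₀ M = Σ₁, and any positive definite N with N Σ₀ N = Σ₁ equals M. -/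
open Matrix
open scoped Classical

/-- The positive semidefinite square root of a matrix, extended by `0` to
matrices that are not positive semidefinite.  For a positive definite matrix
`S`, `psqrt S` is the unique positive definite square root `S^{1/2}` of `S`. -/
noncomputable def psqrt {n : ℕ} (S : Matrix (Fin n) (Fin n) ℝ) :
    Matrix (Fin n) (Fin n) ℝ :=
  if h : S.PosSemidef then
    (h.1.eigenvectorUnitary : Matrix (Fin n) (Fin n) ℝ) *
      diagonal ((↑) ∘ (Real.sqrt ∘ h.1.eigenvalues)) *
      (star h.1.eigenvectorUnitary : Matrix (Fin n) (Fin n) ℝ)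
  else 0

/-!
Writing `A = S₀^{1/2}`, the substitution `N ↦ A N A` preserves positive definiteness and turns
`N S₀ N = S₁` into `(A N A)² = A S₁ A`. Existence and uniqueness of `M` therefore reduce to
existence and uniqueness of the positive square root of `A S₁ A`, which is taken from the
continuous functional calculus.
-/

open scoped MatrixOrder

theorem IsUnit.mul_mul_self_eq_iff {M : Type*} [Monoid M] {a : M} (ha : IsUnit a) (x y : M) :
    (a * x * a) * (a * x * a) = a * y * a ↔ x * (a * a) * x = y := by
  have : (a * x * a) * (a * x * a) = a * (x * (a * a) * x) * a := by simp only [mul_assoc]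
  rw [this, ha.mul_left_inj, ha.mul_right_inj]

theorem Matrix.mul_mul_nonsing_inv_conj {ι R : Type*} [Fintype ι] [DecidableEq ι] [CommRing R]
    {A : Matrix ι ι R} (hA : IsUnit A) (B : Matrix ι ι R) : A * (A⁻¹ * B * A⁻¹) * A = B := by
  have hdet := (isUnit_iff_isUnit_det A).mp hA
  rw [← mul_assoc, ← mul_assoc, mul_nonsing_inv _ hdet, one_mul, mul_assoc,
    nonsing_inv_mul _ hdet, mul_one]

theorem Matrix.IsHermitian.posDef_mul_mul_iff {ι R : Type*} [Fintype ι] [DecidableEq ι] [Ring R]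
    [PartialOrder R] [StarRing R] {A X : Matrix ι ι R} (hA : A.IsHermitian) (hU : IsUnit A) :
    (A * X * A).PosDef ↔ X.PosDef := by
  simpa only [star_eq_conjTranspose, hA.eq] using hU.posDef_star_left_conjugate_iff (x := X)

section psqrt

variable {n : ℕ} {S : Matrix (Fin n) (Fin n) ℝ}

theorem psqrt_eq_cfcSqrt (hS : S.PosSemidef) : psqrt S = CFC.sqrt S := by
  rw [psqrt, dif_pos hS, CFC.sqrt_eq_cfc, cfc_nnreal_eq_real _ S, hS.1.cfc_eq,
    IsHermitian.cfc, Unitary.conjStarAlgAut_apply]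
  congr 3
  funext i
  simp [Real.coe_sqrt, Real.coe_toNNReal', max_eq_left (hS.eigenvalues_nonneg i)]

theorem Matrix.PosDef.psqrt (hS : S.PosDef) : (psqrt S).PosDef := by
  rw [psqrt_eq_cfcSqrt hS.posSemidef]
  exact hS.isStrictlyPositive.sqrt.posDef

theorem mul_self_eq_iff_eq_psqrt {X : Matrix (Fin n) (Fin n) ℝ} (hX : X.PosSemidef)
    (hS : S.PosSemidef) : X * X = S ↔ X = psqrt S := by
  rw [psqrt_eq_cfcSqrt hS]
  exact ⟨fun h => (CFC.sqrt_unique h hX.nonneg).symm,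
    fun h => h ▸ CFC.sqrt_mul_sqrt_self S hS.nonneg⟩

end psqrt

/-- Let `S₀, S₁` be symmetric positive definite real `n × n` matrices.  Then
`M = S₀^{-1/2} (S₀^{1/2} S₁ S₀^{1/2})^{1/2} S₀^{-1/2}` is the unique symmetric
positive definite matrix with `M S₀ M = S₁`.  (`M` is the optimal transport
(Monge) map between centered Gaussians with covariances `S₀` and `S₁`.) -/
theorem optimal_transport_map_unique {n : ℕ} (S₀ S₁ : Matrix (Fin n) (Fin n) ℝ)
    (h₀ : S₀.PosDef) (h₁ : S₁.PosDef) :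
    ((psqrt S₀)⁻¹ * psqrt (psqrt S₀ * S₁ * psqrt S₀) * (psqrt S₀)⁻¹).PosDef ∧
    ((psqrt S₀)⁻¹ * psqrt (psqrt S₀ * S₁ * psqrt S₀) * (psqrt S₀)⁻¹) * S₀ *
      ((psqrt S₀)⁻¹ * psqrt (psqrt S₀ * S₁ * psqrt S₀) * (psqrt S₀)⁻¹) = S₁ ∧
    ∀ N : Matrix (Fin n) (Fin n) ℝ, N.PosDef → N * S₀ * N = S₁ →
      N = (psqrt S₀)⁻¹ * psqrt (psqrt S₀ * S₁ * psqrt S₀) * (psqrt S₀)⁻¹ := by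
  set A := psqrt S₀
  have hA : A.PosDef := h₀.psqrt
  have hAA : A * A = S₀ := (mul_self_eq_iff_eq_psqrt hA.posSemidef h₀.posSemidef).mpr rfl
  have hAS₁A : (A * S₁ * A).PosDef := (hA.1.posDef_mul_mul_iff hA.isUnit).mpr h₁
  set B := psqrt (A * S₁ * A)
  have transport_iff : ∀ N : Matrix (Fin n) (Fin n) ℝ, N.PosDef →
      (N * S₀ * N = S₁ ↔ A * N * A = B) := by
    intro N hN
    have hANA : (A * N * A).PosDef := (hA.1.posDef_mul_mul_iff hA.isUnit).mpr hN
    rw [← hAA, ← hA.isUnit.mul_mul_self_eq_iff]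
    exact mul_self_eq_iff_eq_psqrt hANA.posSemidef hAS₁A.posSemidef
  have hAMA : A * (A⁻¹ * B * A⁻¹) * A = B := mul_mul_nonsing_inv_conj hA.isUnit B
  have hM : (A⁻¹ * B * A⁻¹).PosDef :=
    (hA.inv.1.posDef_mul_mul_iff hA.inv.isUnit).mpr hAS₁A.psqrt
  refine ⟨hM, (transport_iff _ hM).mpr hAMA, fun N hN hNS => ?_⟩
  have hANA := (transport_iff N hN).mp hNS
  rwa [← hAMA, hA.isUnit.mul_left_inj, hA.isUnit.mul_right_inj] at hANA
end

section
/- Let k ≥ 1 and let Σ₀, Σ₁, …, Σ_k be symmetric positive definite real n×n matrices with Σ₀ = I and Σ_k = I. Suppose M₁, …, M_k are symmetric positive definite real n×n matrices satisfying Mᵢ Σ_{i-1} Mᵢ = Σᵢ for each i = 1, …, k. Then the product M_k M_{k-1} ⋯ M₁ is an orthogonal matrix with determinant 1. -/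
open Matrix

/-- Let `k ≥ 1` and let `S 0, S 1, …, S k` be symmetric positive definite real
`n × n` matrices with `S 0 = I` and `S k = I`.  Suppose `M 0, …, M (k-1)` are
symmetric positive definite matrices (the map `M i` playing the role of `Mᵢ₊₁`)
satisfying `M i * S i * M i = S (i+1)` for each `i`.  Then the product
`M (k-1) * ⋯ * M 0` is an orthogonal matrix with determinant `1`. -/
theorem loop_of_transport_maps_is_rotation {n k : ℕ} (hk : 1 ≤ k)
    (S : Fin (k + 1) → Matrix (Fin n) (Fin n) ℝ)
    (hS : ∀ i, (S i).PosDef)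
    (hS0 : S 0 = 1) (hSk : S (Fin.last k) = 1)
    (M : Fin k → Matrix (Fin n) (Fin n) ℝ)
    (hM : ∀ i, (M i).PosDef)
    (hstep : ∀ i : Fin k, M i * S i.castSucc * M i = S i.succ) :
    ((List.ofFn M).reverse.prod)ᵀ * (List.ofFn M).reverse.prod = 1 ∧
    ((List.ofFn M).reverse.prod) * ((List.ofFn M).reverse.prod)ᵀ = 1 ∧
    ((List.ofFn M).reverse.prod).det = 1 := by
  have hsym : ∀ i, (M i)ᵀ = M i := by
    intro i
    have h := (hM i).1.eq
    simpa using h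
  set P := (List.ofFn M).reverse.prod with hP
  have key : ∀ j (hj : j ≤ k),
      (((List.ofFn M).take j).reverse.prod) * (((List.ofFn M).take j).reverse.prod)ᵀ
        = S ⟨j, Nat.lt_succ_of_le hj⟩ := by
    intro j
    induction j with
    | zero =>
      intro hj
      have : (⟨0, Nat.lt_succ_of_le hj⟩ : Fin (k+1)) = 0 := rfl
      simp [this, hS0]
    | succ j ih =>
      intro hj
      have hj' : j < k := hj
      have hjk : j ≤ k := le_of_lt hj'
      have hlen : j < (List.ofFn M).length := by simpa using hj'
      have htake : (List.ofFn M).take (j+1) = (List.ofFn M).take j ++ [M ⟨j, hj'⟩] := by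
        rw [List.take_succ, List.getElem?_eq_getElem hlen]
        simp
      rw [htake, List.reverse_append]
      simp only [List.prod_append, List.prod_cons, List.prod_nil, mul_one,
        List.reverse_singleton, List.prod_singleton]
      rw [transpose_mul, hsym]
      have ihj := ih hjk
      calc M ⟨j, hj'⟩ * ((List.ofFn M).take j).reverse.prod *
            ((((List.ofFn M).take j).reverse.prod)ᵀ * M ⟨j, hj'⟩)
          = M ⟨j, hj'⟩ * (((List.ofFn M).take j).reverse.prod *
              (((List.ofFn M).take j).reverse.prod)ᵀ) * M ⟨j, hj'⟩ := by
            noncomm_ring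
        _ = M ⟨j, hj'⟩ * S ⟨j, Nat.lt_succ_of_le hjk⟩ * M ⟨j, hj'⟩ := by rw [ihj]
        _ = S ⟨j+1, Nat.lt_succ_of_le hj⟩ := by
            have := hstep ⟨j, hj'⟩
            convert this using 3 <;> rfl
  have hfull : (List.ofFn M).take k = List.ofFn M := by
    apply List.take_of_length_le; simp
  have hPPt : P * Pᵀ = 1 := by
    have := key k le_rfl
    rw [hfull] at this
    rw [hP, this]
    have : (⟨k, Nat.lt_succ_of_le le_rfl⟩ : Fin (k+1)) = Fin.last k := rfl
    rw [this, hSk]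
  have hPtP : Pᵀ * P = 1 := mul_eq_one_comm.mp hPPt
  refine ⟨hPtP, hPPt, ?_⟩
  have hdetpos : 0 < P.det := by
    have hd : P.det = ((List.ofFn M).reverse.map Matrix.det).prod := by
      rw [hP, ← Matrix.coe_detMonoidHom]
      exact map_list_prod (Matrix.detMonoidHom) _
    rw [hd]
    apply List.prod_pos
    intro a ha
    simp only [List.map_reverse, List.mem_reverse, List.mem_map, List.mem_ofFn] at ha
    obtain ⟨A, ⟨i, rfl⟩, rfl⟩ := ha
    exact (hM i).det_pos
  have hsq : P.det * P.det = 1 := by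
    have := congrArg Matrix.det hPPt
    rwa [Matrix.det_mul, Matrix.det_transpose, Matrix.det_one] at this
  nlinarith
end
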